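/- In the sequent calculus LK, the left implication formula admits a principal case reduction: from sequents ⇒ A (as multiset {r:A}), B ⇒ (as multiset {l:B}), and A ⇒ B (as multiset {l:A, r:B}), the empty sequent is derivable using only the structural rules (in fact, two multicuts). -/

import Mathlib

/- Sequents are multisets of labelled formulas `Bool × α`, with label `true` = l
and `false` = r.  So the sequent `⇒ A` is `{(false, A)}`, the sequent `B ⇒` is
`{(true, B)}`, and `A ⇒ B` is `{(true, A), (false, B)}`. -/

/-- `Γstar` is a contraction of `Γ`. -/
def IsContraction {α : Type*} [DecidableEq α] (Γstar Γ : Multiset α) : Prop :=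
  (∀ a : α, a ∈ Γstar ↔ a ∈ Γ) ∧ ∀ a : α, Γstar.count a ≤ Γ.count a

/-- Derivability from a set `H` of hypothesis sequents using only the structural
rules: weakening, contraction, and multicut (cut formula `C`, multiplicities
`p, q ≥ 1`). -/
inductive StructDer {α : Type*} [DecidableEq α] (H : Set (Multiset (Bool × α))) :
    Multiset (Bool × α) → Prop
  | hyp {S} : S ∈ H → StructDer H S
  | weak {S} (T) : StructDer H S → StructDer H (S + T)
  | contr {S Sstar} : StructDer H S → IsContraction Sstar S → StructDer H Sstar
  | mcut {Γ Δ : Multiset (Bool × α)} {C : α} {p q : ℕ} : 1 ≤ p → 1 ≤ q →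
      StructDer H (Γ + Multiset.replicate p (false, C)) →
      StructDer H (Δ + Multiset.replicate q (true, C)) →
      StructDer H (Γ + Δ)

namespace StructDer

variable {α : Type*} [DecidableEq α] {H : Set (Multiset (Bool × α))}

theorem cut {Γ Δ : Multiset (Bool × α)} {C : α} (hΓ : StructDer H ((false, C) ::ₘ Γ))
    (hΔ : StructDer H ((true, C) ::ₘ Δ)) : StructDer H (Γ + Δ) :=
  mcut (p := 1) (q := 1) le_rfl le_rfl
    (by rwa [Multiset.replicate_one, ← Multiset.cons_zero, Multiset.add_cons, add_zero])
    (by rwa [Multiset.replicate_one, ← Multiset.cons_zero, Multiset.add_cons, add_zero])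

theorem empty_of_imp_premises {A B : α} (hA : {(false, A)} ∈ H) (hB : {(true, B)} ∈ H)
    (hAB : {(true, A), (false, B)} ∈ H) : StructDer H 0 := by
  have hRB : StructDer H ((false, B) ::ₘ 0) := by
    simpa using (hyp (S := (false, A) ::ₘ 0) hA).cut (hyp hAB)
  simpa using hRB.cut (hyp (S := (true, B) ::ₘ 0) hB)

end StructDer

/-- Principal case reduction for `→` in LK: from the auxiliary-formula sequents
`⇒ A`, `B ⇒` and `A ⇒ B` of the rules `(→l)` and `(→r)` for `A → B`, the empty
sequent is derivable using only the structural rules (in fact two multicuts). -/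
theorem imp_principal_reduction {α : Type*} [DecidableEq α] (A B : α) :
    StructDer
      ({({(false, A)} : Multiset (Bool × α)), {(true, B)}, {(true, A), (false, B)}} :
        Set (Multiset (Bool × α)))
      (0 : Multiset (Bool × α)) :=
  StructDer.empty_of_imp_premises (A := A) (B := B) (by simp) (by simp) (by simp)
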